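/- arXiv:0909.1180 — 4 statements merged into one kernel-verified Lean document; each statement's English description precedes it below -/
import Mathlib

section
/- For every natural number n, the sum over k from 0 to n of 1/((k^2+1)((n-k)^2+1)) is strictly less than 6/(n^2+1). -/
/-!
Multiplying by `n² + 1`, the claim is that the terms `tₖ = (n² + 1) / ((k² + 1)((n - k)² + 1))` sum
to less than `6`. The sum is symmetric under `k ↦ n - k`, so it is at most twice the sum over
`k ≤ n / 2`. There `n - k ≥ n / 2`, whence `tₖ ≤ 4 / (k² + 1)`, and these bounds telescope against
`2 / (2k - 1) - 2 / (2k + 1)`. For the first few `k` this is too weak, but `tₖ` decreases in `n`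
once `n > k`, so for `n ≥ 13` it is bounded by its (explicit) value at `n = 13`. The values
`n < 13` are checked directly.
-/

open Finset

theorem sum_range_succ_le_two_nsmul_sum_range_half {M : Type*} [AddCommMonoid M] [PartialOrder M]
    [IsOrderedAddMonoid M] (f : ℕ → M) (n : ℕ) (hf : ∀ k, 0 ≤ f k)
    (hsymm : ∀ k ≤ n, f (n - k) = f k) :
    ∑ k ∈ range (n + 1), f k ≤ 2 • ∑ k ∈ range (n / 2 + 1), f k := by
  rw [← sum_range_add_sum_Ico f (by omega : n / 2 + 1 ≤ n + 1), two_nsmul]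
  refine add_le_add_right ?_ _
  calc ∑ k ∈ Ico (n / 2 + 1) (n + 1), f k
      = ∑ k ∈ Ico (n / 2 + 1) (n + 1), f (n - k) :=
        sum_congr rfl fun k hk => (hsymm k (by simp only [mem_Ico] at hk; omega)).symm
    _ = ∑ k ∈ range (n - n / 2), f k := by
        rw [sum_Ico_reflect f _ le_rfl, Nat.sub_self, ← Nat.Ico_zero_eq_range]
        congr 2; omega
    _ ≤ ∑ k ∈ range (n / 2 + 1), f k :=
        sum_le_sum_of_subset_of_nonneg (range_subset_range.2 (by omega)) fun k _ _ => hf k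

theorem one_div_sq_add_one_le_sub (x : ℝ) (hx : 1 ≤ x) :
    1 / (x ^ 2 + 1) ≤ 2 / (2 * x - 1) - 2 / (2 * (x + 1) - 1) := by
  rw [show 2 * (x + 1) - 1 = 2 * x + 1 by ring, div_sub_div _ _ (by linarith) (by linarith),
    div_le_div_iff₀ (by positivity) (by nlinarith)]
  nlinarith

theorem sum_Ico_one_div_sq_add_one_le (a b : ℕ) (ha : 1 ≤ a) :
    ∑ i ∈ Ico a b, 1 / ((i : ℝ) ^ 2 + 1) ≤ 2 / (2 * (a : ℝ) - 1) := by
  have ha' : (1 : ℝ) ≤ a := by exact_mod_cast ha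
  rcases le_or_gt a b with hab | hba
  · let f : ℕ → ℝ := fun i => -(2 / (2 * i - 1))
    have hb : (1 : ℝ) ≤ b := by exact_mod_cast ha.trans hab
    calc ∑ i ∈ Ico a b, 1 / ((i : ℝ) ^ 2 + 1) ≤ ∑ i ∈ Ico a b, (f (i + 1) - f i) := by
          refine sum_le_sum fun i hi => ?_
          have hi : (1 : ℝ) ≤ i := by exact_mod_cast ha.trans (mem_Ico.1 hi).1
          simpa [f, sub_eq_add_neg, add_comm] using one_div_sq_add_one_le_sub i hi
      _ = 2 / (2 * a - 1) - 2 / (2 * b - 1) := by rw [sum_Ico_sub f hab]; ring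
      _ ≤ 2 / (2 * a - 1) := sub_le_self _ (div_nonneg zero_le_two (by linarith))
  · rw [Ico_eq_empty_of_le hba.le, sum_empty]
    exact div_nonneg zero_le_two (by linarith)

noncomputable def convTerm (n k : ℕ) : ℝ :=
  1 / (((k : ℝ) ^ 2 + 1) * (((n - k : ℕ) : ℝ) ^ 2 + 1))

theorem convTerm_nonneg (n k : ℕ) : 0 ≤ convTerm n k := by
  unfold convTerm; positivity

theorem convTerm_sub (n : ℕ) {k : ℕ} (hk : k ≤ n) : convTerm n (n - k) = convTerm n k := by
  rw [convTerm, convTerm, Nat.sub_sub_self hk, mul_comm]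

theorem sq_add_one_mul_convTerm_le_of_lt_of_le {k N n : ℕ} (hkN : k < N) (hNn : N ≤ n) :
    ((n : ℝ) ^ 2 + 1) * convTerm n k ≤ ((N : ℝ) ^ 2 + 1) * convTerm N k := by
  have hk : (k : ℝ) + 1 ≤ N := by exact_mod_cast hkN
  have hN : (N : ℝ) ≤ n := by exact_mod_cast hNn
  rw [convTerm, convTerm, Nat.cast_sub (hkN.le.trans hNn), Nat.cast_sub hkN.le, mul_one_div,
    mul_one_div, div_le_div_iff₀ (by positivity) (by positivity)]
  have key : ((N : ℝ) ^ 2 + 1) * ((n - k) ^ 2 + 1) - ((n : ℝ) ^ 2 + 1) * ((N - k) ^ 2 + 1)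
      = k * (n - N) * (2 * n * N - k * (n + N) - 2) := by ring
  have : 0 ≤ (k : ℝ) * (n - N) * (2 * n * N - k * (n + N) - 2) := by
    apply mul_nonneg (mul_nonneg k.cast_nonneg (by linarith))
    nlinarith
  nlinarith

theorem sq_add_one_mul_convTerm_le {n k : ℕ} (h : 2 * k ≤ n) :
    ((n : ℝ) ^ 2 + 1) * convTerm n k ≤ 4 / ((k : ℝ) ^ 2 + 1) := by
  have h' : 2 * (k : ℝ) ≤ n := by exact_mod_cast h
  rw [convTerm, Nat.cast_sub (by omega), mul_one_div,
    div_le_div_iff₀ (by positivity) (by positivity)]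
  have : (n : ℝ) ^ 2 + 1 ≤ 4 * ((n - k) ^ 2 + 1) := by nlinarith [k.cast_nonneg (α := ℝ)]
  nlinarith [sq_nonneg (k : ℝ)]

theorem sq_add_one_mul_sum_convTerm_lt_of_lt {n : ℕ} (hn : n < 13) :
    ∑ k ∈ range (n + 1), ((n : ℝ) ^ 2 + 1) * convTerm n k < 6 := by
  interval_cases n <;> norm_num [sum_range_succ, convTerm]

theorem sq_add_one_mul_sum_convTerm_lt_of_le {n : ℕ} (hn : 13 ≤ n) :
    ∑ k ∈ range (n + 1), ((n : ℝ) ^ 2 + 1) * convTerm n k < 6 := by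
  set g : ℕ → ℝ := fun k => ((n : ℝ) ^ 2 + 1) * convTerm n k
  calc ∑ k ∈ range (n + 1), g k ≤ 2 • ∑ k ∈ range (n / 2 + 1), g k :=
        sum_range_succ_le_two_nsmul_sum_range_half g n
          (fun k => mul_nonneg (by positivity) (convTerm_nonneg n k))
          (fun k hk => by simp only [g, convTerm_sub n hk])
    -- `13` is the least threshold for which this works; the bracket below is then about `2.96`.
    _ = 2 * (∑ k ∈ range 7, g k + ∑ k ∈ Ico 7 (n / 2 + 1), g k) := by
        rw [sum_range_add_sum_Ico g (by omega), two_nsmul, two_mul]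
    _ ≤ 2 * (∑ k ∈ range 7, (13 ^ 2 + 1 : ℝ) * convTerm 13 k
          + ∑ k ∈ Ico 7 (n / 2 + 1), 4 / ((k : ℝ) ^ 2 + 1)) := by
        gcongr with k hk k hk
        · have hk13 : k < 13 := by simp only [mem_range] at hk; omega
          exact (sq_add_one_mul_convTerm_le_of_lt_of_le hk13 hn).trans_eq (by norm_num)
        · exact sq_add_one_mul_convTerm_le (by simp only [mem_Ico] at hk; omega)
    _ ≤ 2 * (∑ k ∈ range 7, (13 ^ 2 + 1 : ℝ) * convTerm 13 k + 4 * (2 / (2 * 7 - 1))) := by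
        simp_rw [div_eq_mul_one_div (4 : ℝ), ← mul_sum]
        gcongr
        exact_mod_cast sum_Ico_one_div_sq_add_one_le 7 (n / 2 + 1) (by norm_num)
    _ < 6 := by norm_num [sum_range_succ, convTerm]

/-- For every natural number `n`,
`∑_{k=0}^n 1/((k²+1)((n-k)²+1)) < 6/(n²+1)`. -/
theorem stmt_0 (n : ℕ) :
    ∑ k ∈ Finset.range (n + 1),
      (1 : ℝ) / (((k : ℝ) ^ 2 + 1) * (((n - k : ℕ) : ℝ) ^ 2 + 1))
      < 6 / ((n : ℝ) ^ 2 + 1) := by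
  have h := (lt_or_ge n 13).elim sq_add_one_mul_sum_convTerm_lt_of_lt
    sq_add_one_mul_sum_convTerm_lt_of_le
  rwa [← mul_sum, mul_comm, ← lt_div_iff₀ (by positivity)] at h
end

section
/- For every j ≥ 1 and every natural number n, the sum over all j-tuples (n_1,...,n_j) of natural numbers with n_1 + ... + n_j = n of the product 1/((n_1^2+1)···(n_j^2+1)) is at most 6^{j-1}/(n^2+1). -/
/-!
With `w k = 1 / (k² + 1)`, the sum in question is the `j`-fold convolution power of `w`
evaluated at `n`. Splitting off the first coordinate of a tuple reduces it, by induction on `j`,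
to the single convolution bound `∑_{a+b=n} w a * w b ≤ 6 * w n`. In that sum the terms with
`a ≤ 1` or `b ≤ 1` are at most `(2 + 8/5) * w n`, and every other term satisfies
`w a * w b ≤ 2 * w n * (w a + w b)`, so they add up to at most `4 * w n * ∑_{k ≥ 2} w k`,
where `∑_{k ≥ 2} w k ≤ 3/5` by telescoping.
-/

open Finset Finset.Nat

theorem Finset.Nat.sum_antidiagonalTuple_succ {M : Type*} [AddCommMonoid M] (k n : ℕ)
    (F : (Fin (k + 1) → ℕ) → M) :
    ∑ f ∈ antidiagonalTuple (k + 1) n, F f =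
      ∑ p ∈ antidiagonal n, ∑ g ∈ antidiagonalTuple k p.2, F (Fin.cons p.1 g) := by
  simp only [Finset.sum, antidiagonalTuple, Multiset.Nat.antidiagonalTuple,
    List.Nat.antidiagonalTuple, ← Multiset.coe_bind, Multiset.map_bind, Multiset.sum_bind,
    ← Multiset.map_coe, Multiset.map_map]
  rfl

theorem Finset.Nat.sum_antidiagonal_add_two {M : Type*} [AddCommMonoid M] (n : ℕ)
    (f : ℕ × ℕ → M) :
    ∑ p ∈ antidiagonal (n + 2), f p =
      f (0, n + 2) + f (n + 2, 0) + ∑ p ∈ antidiagonal n, f (p.1 + 1, p.2 + 1) := by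
  rw [sum_antidiagonal_succ, sum_antidiagonal_succ']
  exact (add_assoc _ _ _).symm

theorem Finset.Nat.sum_antidiagonal_add_eq_two_nsmul_sum_range {M : Type*} [AddCommMonoid M]
    (n : ℕ) (g : ℕ → M) :
    ∑ p ∈ antidiagonal n, (g p.1 + g p.2) = 2 • ∑ k ∈ range (n + 1), g k := by
  have hswap : ∑ p ∈ antidiagonal n, g p.2 = ∑ p ∈ antidiagonal n, g p.1 :=
    sum_antidiagonal_swap (f := fun p => g p.1)
  rw [sum_add_distrib, hswap, two_nsmul, sum_antidiagonal_eq_sum_range_succ_mk]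

theorem Finset.Nat.sum_antidiagonalTuple_prod_le_pow_mul {R : Type*} [CommSemiring R]
    [PartialOrder R] [IsOrderedRing R] {w : ℕ → R} {C : R} (hw : ∀ n, 0 ≤ w n) (hC : 0 ≤ C)
    (hconv : ∀ n, ∑ p ∈ antidiagonal n, w p.1 * w p.2 ≤ C * w n) (k n : ℕ) :
    ∑ f ∈ antidiagonalTuple (k + 1) n, ∏ i, w (f i) ≤ C ^ k * w n := by
  induction k generalizing n with
  | zero => simp
  | succ k ih =>
    calc ∑ f ∈ antidiagonalTuple (k + 2) n, ∏ i, w (f i)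
        = ∑ p ∈ antidiagonal n, w p.1 * ∑ g ∈ antidiagonalTuple (k + 1) p.2, ∏ i, w (g i) := by
          simp only [sum_antidiagonalTuple_succ, Fin.prod_univ_succ, Fin.cons_zero,
            Fin.cons_succ, mul_sum]
      _ ≤ ∑ p ∈ antidiagonal n, w p.1 * (C ^ k * w p.2) := by
          gcongr with p
          · exact hw _
          · exact ih _
      _ = C ^ k * ∑ p ∈ antidiagonal n, w p.1 * w p.2 := by
          rw [mul_sum]
          exact sum_congr rfl fun p _ => mul_left_comm _ _ _
      _ ≤ C ^ k * (C * w n) := by gcongr; exact hconv n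
      _ = C ^ (k + 1) * w n := by ring

noncomputable def invSqAddOne (k : ℕ) : ℝ := 1 / ((k : ℝ) ^ 2 + 1)

lemma invSqAddOne_pos (k : ℕ) : 0 < invSqAddOne k := by
  unfold invSqAddOne
  positivity

-- `(a + b)² + 1 ≤ 2 ((a² + 1) + (b² + 1))`
lemma invSqAddOne_mul_le (a b : ℕ) :
    invSqAddOne a * invSqAddOne b ≤
      2 * invSqAddOne (a + b) * (invSqAddOne a + invSqAddOne b) := by
  unfold invSqAddOne
  push_cast
  field_simp
  nlinarith [sq_nonneg ((a : ℝ) - b)]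

lemma sum_range_invSqAddOne_add_two_le (N : ℕ) :
    ∑ k ∈ range N, invSqAddOne (k + 2) ≤ 3 / 5 := by
  -- telescoping against `1 / (k² + 1) ≤ 2 / (2k - 1) - 2 / (2k + 1)`
  have telescope (N : ℕ) :
      ∑ k ∈ range N, invSqAddOne (k + 3) + 2 / (2 * N + 5) ≤ 2 / 5 := by
    induction N with
    | zero => norm_num
    | succ N ih =>
      have step : invSqAddOne (N + 3) ≤ 2 / (2 * N + 5) - 2 / (2 * (N + 1 : ℕ) + 5) := by
        unfold invSqAddOne
        push_cast
        rw [div_sub_div _ _ (by positivity) (by positivity),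
          div_le_div_iff₀ (by positivity) (by positivity)]
        nlinarith
      rw [sum_range_succ]
      linarith
  cases N with
  | zero => norm_num
  | succ N =>
    have hpos : (0 : ℝ) < 2 / (2 * N + 5) := by positivity
    have h2 : invSqAddOne 2 = 1 / 5 := by norm_num [invSqAddOne]
    rw [sum_range_succ', zero_add, h2]
    linarith [telescope N]

-- The edge bound `invSqAddOne (n - 1) ≤ 8/5 * invSqAddOne n` fails at `n = 4`, so the
-- cases `n < 5` are checked numerically.
theorem sum_antidiagonal_invSqAddOne_mul_le (n : ℕ) :
    ∑ p ∈ antidiagonal n, invSqAddOne p.1 * invSqAddOne p.2 ≤ 6 * invSqAddOne n := by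
  obtain hn | ⟨m, rfl⟩ : n < 5 ∨ ∃ m, n = m + 5 := by
    rcases lt_or_ge n 5 with h | h
    · exact .inl h
    · exact .inr ⟨n - 5, by omega⟩
  · interval_cases n <;> norm_num [invSqAddOne, sum_antidiagonal_succ]
  have middle : ∑ p ∈ antidiagonal (m + 1), invSqAddOne (p.1 + 2) * invSqAddOne (p.2 + 2)
      ≤ 12 / 5 * invSqAddOne (m + 5) :=
    calc _ ≤ ∑ p ∈ antidiagonal (m + 1),
            2 * invSqAddOne (m + 5) * (invSqAddOne (p.1 + 2) + invSqAddOne (p.2 + 2)) := by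
          refine sum_le_sum fun p hp => ?_
          have hsum : p.1 + 2 + (p.2 + 2) = m + 5 := by
            rw [HasAntidiagonal.mem_antidiagonal] at hp
            omega
          simpa only [hsum] using invSqAddOne_mul_le (p.1 + 2) (p.2 + 2)
      _ = 4 * invSqAddOne (m + 5) * ∑ k ∈ range (m + 2), invSqAddOne (k + 2) := by
          rw [← mul_sum,
            sum_antidiagonal_add_eq_two_nsmul_sum_range (g := fun k => invSqAddOne (k + 2)),
            nsmul_eq_mul]
          ring
      _ ≤ 4 * invSqAddOne (m + 5) * (3 / 5) := by
          have := invSqAddOne_pos (m + 5)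
          gcongr
          exact sum_range_invSqAddOne_add_two_le _
      _ = 12 / 5 * invSqAddOne (m + 5) := by ring
  have edge : invSqAddOne (m + 4) ≤ 8 / 5 * invSqAddOne (m + 5) := by
    unfold invSqAddOne
    push_cast
    rw [mul_one_div, div_le_div_iff₀ (by positivity) (by positivity)]
    nlinarith [(Nat.cast_nonneg m : (0 : ℝ) ≤ m)]
  have h0 : invSqAddOne 0 = 1 := by norm_num [invSqAddOne]
  have h1 : invSqAddOne 1 = 1 / 2 := by norm_num [invSqAddOne]
  rw [sum_antidiagonal_add_two, sum_antidiagonal_add_two]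
  simp only [add_assoc, Nat.reduceAdd, zero_add, h0, h1] at middle ⊢
  linarith

/-- For every `j ≥ 1` and every natural number `n`, the sum over all `j`-tuples
`(n₁,…,n_j)` of natural numbers with `n₁+⋯+n_j = n` of `∏ 1/(nᵢ²+1)` is at most
`6^(j-1)/(n²+1)`. -/
theorem stmt_1 (j n : ℕ) (hj : 1 ≤ j) :
    ∑ f ∈ Finset.Nat.antidiagonalTuple j n,
      ∏ i : Fin j, (1 : ℝ) / ((f i : ℝ) ^ 2 + 1)
      ≤ 6 ^ (j - 1) / ((n : ℝ) ^ 2 + 1) := by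
  obtain ⟨k, rfl⟩ : ∃ k, j = k + 1 := ⟨j - 1, by omega⟩
  simpa only [invSqAddOne, Nat.add_sub_cancel, mul_one_div] using
    sum_antidiagonalTuple_prod_le_pow_mul (fun k => (invSqAddOne_pos k).le) (by norm_num)
      sum_antidiagonal_invSqAddOne_mul_le k n
end

section
/- Let σ : [0,∞) → ℝ be continuous with σ(t) ≥ σ_0 > ρ ≥ 0 for all t, let f_1 ∈ e^{ρt}L^p(0,∞), and let x_1 solve x_1'(t) = σ(t)x_1(t) + f_1(t). Then x_1 belongs to e^{ρt}L^p(0,∞) if and only if x_1(0) = -∫_0^∞ e^{-∫_0^t σ(τ)dτ} f_1(t) dt, and in that case x_1(t) = -∫_t^∞ e^{∫_s^t σ(τ)dτ} f_1(s) ds for all t ≥ 0. -/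
/-!
Write `S(t) = ∫₀ᵗ σ`, `g = e^{-S} f₁` and `h = e^{-ρt} f₁ ∈ L^p`. Since `S(s) - S(t) ≥ σ₀ (s - t)`,
`|g(s)| ≤ e^{-(σ₀-ρ)s} |h(s)|`, so `g` is integrable on `(0, ∞)` by Hölder, and the Duhamel formula
reads `e^{-ρt} x₁(t) = e^{S(t)-ρt} (x₁(0) + ∫₀ᵗ g)`. If `x₁(0) + ∫₀^∞ g ≠ 0`, this grows like
`e^{(σ₀-ρ)t}` and lies in no `L^p`. Otherwise `x₁(t) = -e^{S(t)} ∫ₜ^∞ g`, so `|e^{-ρt} x₁(t)|` is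
dominated by `∫ₜ^∞ e^{-(σ₀-ρ)(s-t)} |h(s)| ds`, an integral operator whose kernel has row and column
integrals `1/(σ₀-ρ)`; by the Schur test it maps `L^p` to itself.
-/

open MeasureTheory Set Filter
open scoped ENNReal Topology

theorem ENNReal.lintegral_mul_rpow_le {α : Type*} [MeasurableSpace α] {μ : Measure α}
    {k G : α → ℝ≥0∞} (hk : AEMeasurable k μ) (hG : AEMeasurable G μ) {p : ℝ} (hp : 1 ≤ p) :
    (∫⁻ a, k a * G a ∂μ) ^ p ≤ (∫⁻ a, k a ∂μ) ^ (p - 1) * ∫⁻ a, k a * G a ^ p ∂μ := by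
  have hp0 : 0 < p := by linarith
  -- Hölder with weights `1 - 1/p` and `1/p`, applied to `k` and `k * G ^ p`
  have hsplit : ∀ a, k a ^ (1 - p⁻¹) * (k a * G a ^ p) ^ p⁻¹ = k a * G a := by
    intro a
    have h1 : 0 ≤ 1 - p⁻¹ := sub_nonneg.2 (inv_le_one_of_one_le₀ hp)
    rw [ENNReal.mul_rpow_of_nonneg _ _ (inv_nonneg.2 hp0.le), ← mul_assoc,
      ← ENNReal.rpow_add_of_nonneg _ _ h1 (inv_nonneg.2 hp0.le), sub_add_cancel,
      ENNReal.rpow_one, ENNReal.rpow_rpow_inv hp0.ne']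
  have holder := ENNReal.lintegral_mul_norm_pow_le (g := fun a => k a * G a ^ p) hk
    (hk.mul (hG.pow_const p))
    (sub_nonneg.2 (inv_le_one_of_one_le₀ hp)) (inv_nonneg.2 hp0.le) (sub_add_cancel 1 p⁻¹)
  rw [lintegral_congr hsplit] at holder
  calc (∫⁻ a, k a * G a ∂μ) ^ p
      ≤ ((∫⁻ a, k a ∂μ) ^ (1 - p⁻¹) * (∫⁻ a, k a * G a ^ p ∂μ) ^ p⁻¹) ^ p :=
        ENNReal.rpow_le_rpow holder hp0.le
    _ = (∫⁻ a, k a ∂μ) ^ (p - 1) * ∫⁻ a, k a * G a ^ p ∂μ := by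
        rw [ENNReal.mul_rpow_of_nonneg _ _ hp0.le, ← ENNReal.rpow_mul,
          ENNReal.rpow_inv_rpow hp0.ne']
        congr 2
        field_simp

theorem lintegral_rpow_lintegral_mul_le {α β : Type*} [MeasurableSpace α] [MeasurableSpace β]
    {μ : Measure α} {ν : Measure β} [SFinite μ] [SFinite ν] {k : α → β → ℝ≥0∞}
    (hk : Measurable (Function.uncurry k)) {G : β → ℝ≥0∞} (hG : AEMeasurable G ν) {A B : ℝ≥0∞}
    (hA : ∀ a, ∫⁻ b, k a b ∂ν ≤ A) (hB : ∀ b, ∫⁻ a, k a b ∂μ ≤ B) {p : ℝ} (hp : 1 ≤ p) :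
    ∫⁻ a, (∫⁻ b, k a b * G b ∂ν) ^ p ∂μ ≤ A ^ (p - 1) * B * ∫⁻ b, G b ^ p ∂ν := by
  have hkG : AEMeasurable (Function.uncurry fun a b => k a b * G b ^ p) (μ.prod ν) :=
    hk.aemeasurable.mul (hG.pow_const p).comp_snd
  calc ∫⁻ a, (∫⁻ b, k a b * G b ∂ν) ^ p ∂μ
      ≤ ∫⁻ a, A ^ (p - 1) * ∫⁻ b, k a b * G b ^ p ∂ν ∂μ := by
        refine lintegral_mono fun a => ?_
        refine (ENNReal.lintegral_mul_rpow_le (hk.of_uncurry_left).aemeasurable hG hp).trans ?_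
        gcongr
        exact hA a
    _ = A ^ (p - 1) * ∫⁻ b, (∫⁻ a, k a b ∂μ) * G b ^ p ∂ν := by
        rw [lintegral_const_mul'' _ hkG.lintegral_prod_right, lintegral_lintegral_swap hkG]
        congr 1
        refine lintegral_congr fun b => ?_
        exact lintegral_mul_const _ hk.of_uncurry_right
    _ ≤ A ^ (p - 1) * B * ∫⁻ b, G b ^ p ∂ν := by
        rw [mul_assoc, ← lintegral_const_mul'' _ (hG.pow_const p)]
        gcongr with b
        exact hB b

theorem lintegral_exp_neg_mul_sub_Ioi {ε : ℝ} (hε : 0 < ε) (t : ℝ) :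
    ∫⁻ s in Ioi t, ENNReal.ofReal (Real.exp (-ε * (s - t))) = ENNReal.ofReal ε⁻¹ := by
  have hsplit : ∀ s, Real.exp (-ε * (s - t)) = Real.exp (ε * t) * Real.exp (-ε * s) := by
    intro s; rw [← Real.exp_add]; ring_nf
  simp_rw [hsplit]
  have hint := integrableOn_exp_mul_Ioi (neg_lt_zero.2 hε) t
  rw [← ofReal_integral_eq_lintegral_ofReal (hint.const_mul _)
    (ae_of_all _ fun s => by positivity), integral_const_mul,
    integral_exp_mul_Ioi (neg_lt_zero.2 hε)]
  congr 1
  rw [mul_div_assoc', mul_neg, neg_div_neg_eq, ← Real.exp_add]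
  simp [div_eq_inv_mul]

theorem lintegral_exp_neg_mul_sub_Iio {ε : ℝ} (hε : 0 < ε) (s : ℝ) :
    ∫⁻ t in Iio s, ENNReal.ofReal (Real.exp (-ε * (s - t))) = ENNReal.ofReal ε⁻¹ := by
  have hsplit : ∀ t, Real.exp (-ε * (s - t)) = Real.exp (-ε * s) * Real.exp (ε * t) := by
    intro t; rw [← Real.exp_add]; ring_nf
  simp_rw [hsplit]
  have hint := (integrableOn_exp_mul_Iic hε s).mono_set Iio_subset_Iic_self
  rw [← ofReal_integral_eq_lintegral_ofReal (hint.const_mul _)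
    (ae_of_all _ fun s => by positivity), integral_const_mul, ← integral_Iic_eq_integral_Iio,
    integral_exp_mul_Iic hε]
  congr 1
  rw [mul_div_assoc', ← Real.exp_add]
  simp [div_eq_inv_mul]

theorem memLp_Ioi_of_enorm_le_lintegral_exp_kernel {E F : Type*} [NormedAddCommGroup E]
    [NormedAddCommGroup F] {p : ℝ≥0∞} (hp : 1 ≤ p) {ε : ℝ} (hε : 0 < ε) {h : ℝ → F} {X : ℝ → E}
    (hh : MemLp h p (volume.restrict (Ioi 0)))
    (hXm : AEStronglyMeasurable X (volume.restrict (Ioi 0)))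
    (hX : ∀ t ∈ Ioi (0 : ℝ),
      ‖X t‖ₑ ≤ ∫⁻ s in Ioi t, ENNReal.ofReal (Real.exp (-ε * (s - t))) * ‖h s‖ₑ) :
    MemLp X p (volume.restrict (Ioi 0)) := by
  set k : ℝ → ℝ → ℝ≥0∞ := fun t =>
    (Ioi t).indicator fun s => ENNReal.ofReal (Real.exp (-ε * (s - t)))
  have hk : Measurable (Function.uncurry k) := by
    unfold Function.uncurry
    simp only [k, indicator_apply, mem_Ioi]
    exact Measurable.ite (measurableSet_lt measurable_fst measurable_snd) (by fun_prop)
      measurable_const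
  have hkX : ∀ t ∈ Ioi (0 : ℝ), ‖X t‖ₑ ≤ ∫⁻ s in Ioi 0, k t s * ‖h s‖ₑ := by
    intro t ht
    rw [lintegral_congr fun s => (indicator_mul_left (Ioi t) _ fun s => ‖h s‖ₑ).symm,
      lintegral_indicator measurableSet_Ioi, Measure.restrict_restrict measurableSet_Ioi,
      inter_eq_left.2 (Ioi_subset_Ioi (le_of_lt ht))]
    exact hX t ht
  have hA : ∀ t, ∫⁻ s in Ioi 0, k t s ≤ ENNReal.ofReal ε⁻¹ := fun t =>
    (setLIntegral_le_lintegral _ _).trans_eq <| by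
      rw [lintegral_indicator measurableSet_Ioi, lintegral_exp_neg_mul_sub_Ioi hε]
  have hB : ∀ s, ∫⁻ t in Ioi 0, k t s ≤ ENNReal.ofReal ε⁻¹ := fun s =>
    (setLIntegral_le_lintegral _ _).trans_eq <| by
      have : ∀ t, k t s = (Iio s).indicator (fun t => ENNReal.ofReal (Real.exp (-ε * (s - t)))) t :=
        fun t => by simp [k, indicator_apply]
      rw [lintegral_congr this, lintegral_indicator measurableSet_Iio,
        lintegral_exp_neg_mul_sub_Iio hε]
  refine ⟨hXm, ?_⟩
  rcases eq_or_ne p ∞ with rfl | hp_top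
  · have hC := hh.eLpNorm_lt_top
    rw [eLpNorm_exponent_top] at hC ⊢
    refine lt_of_le_of_lt (essSup_le_of_ae_le (ENNReal.ofReal ε⁻¹ * _) ?_)
      (ENNReal.mul_lt_top ENNReal.ofReal_lt_top hC)
    filter_upwards [self_mem_ae_restrict measurableSet_Ioi] with t ht
    calc ‖X t‖ₑ ≤ ∫⁻ s in Ioi 0, k t s * ‖h s‖ₑ := hkX t ht
      _ ≤ ∫⁻ s in Ioi 0, k t s * eLpNormEssSup h (volume.restrict (Ioi 0)) := by
          refine lintegral_mono_ae ?_
          filter_upwards [ae_le_eLpNormEssSup (f := h)] with s hs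
          gcongr
      _ ≤ ENNReal.ofReal ε⁻¹ * eLpNormEssSup h (volume.restrict (Ioi 0)) := by
          rw [lintegral_mul_const _ hk.of_uncurry_left]
          gcongr
          exact hA t
  · have hp0 : p ≠ 0 := (zero_lt_one.trans_le hp).ne'
    have hr : 1 ≤ p.toReal := by simpa using ENNReal.toReal_mono hp_top hp
    have hh_int := lintegral_rpow_enorm_lt_top_of_eLpNorm_lt_top hp0 hp_top hh.eLpNorm_lt_top
    rw [eLpNorm_lt_top_iff_lintegral_rpow_enorm_lt_top hp0 hp_top]
    calc ∫⁻ t in Ioi 0, ‖X t‖ₑ ^ p.toReal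
        ≤ ∫⁻ t in Ioi 0, (∫⁻ s in Ioi 0, k t s * ‖h s‖ₑ) ^ p.toReal := by
          refine setLIntegral_mono' measurableSet_Ioi fun t ht => ?_
          gcongr
          exact hkX t ht
      _ ≤ ENNReal.ofReal ε⁻¹ ^ (p.toReal - 1) * ENNReal.ofReal ε⁻¹ *
            ∫⁻ s in Ioi 0, ‖h s‖ₑ ^ p.toReal :=
          lintegral_rpow_lintegral_mul_le hk hh.1.enorm hA hB hr
      _ < ∞ := by
          refine ENNReal.mul_lt_top (ENNReal.mul_lt_top ?_ ENNReal.ofReal_lt_top) hh_int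
          exact ENNReal.rpow_lt_top_of_nonneg (by linarith) ENNReal.ofReal_ne_top

theorem memLp_exp_neg_mul_Ioi {ε : ℝ} (hε : 0 < ε) (q : ℝ≥0∞) :
    MemLp (fun s => Real.exp (-ε * s)) q (volume.restrict (Ioi 0)) := by
  have hm : AEStronglyMeasurable (fun s => Real.exp (-ε * s)) (volume.restrict (Ioi 0)) :=
    (by fun_prop : Continuous fun s => Real.exp (-ε * s)).aestronglyMeasurable
  rcases eq_or_ne q 0 with rfl | hq0
  · exact memLp_zero_iff_aestronglyMeasurable.2 hm
  rcases eq_or_ne q ∞ with rfl | hq_top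
  · refine memLp_top_of_bound hm 1 ?_
    filter_upwards [self_mem_ae_restrict measurableSet_Ioi] with s hs
    rw [Real.norm_of_nonneg (Real.exp_nonneg _), Real.exp_le_one_iff]
    nlinarith [mem_Ioi.1 hs]
  · refine (integrable_norm_rpow_iff hm hq0 hq_top).1 ?_
    have hq : 0 < q.toReal := ENNReal.toReal_pos hq0 hq_top
    have : ∀ s, ‖Real.exp (-ε * s)‖ ^ q.toReal = Real.exp (-(q.toReal * ε) * s) := fun s => by
      rw [Real.norm_of_nonneg (Real.exp_nonneg _), ← Real.exp_mul]; ring_nf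
    simp_rw [this]
    exact integrableOn_exp_mul_Ioi (by nlinarith) 0

theorem MeasureTheory.MemLp.integrableOn_exp_neg_mul_smul_Ioi {F : Type*} [NormedAddCommGroup F]
    [NormedSpace ℝ F] {p : ℝ≥0∞} (hp : 1 ≤ p) {h : ℝ → F}
    (hh : MemLp h p (volume.restrict (Ioi 0))) {ε : ℝ} (hε : 0 < ε) :
    IntegrableOn (fun s => Real.exp (-ε * s) • h s) (Ioi 0) := by
  have := (ENNReal.HolderConjugate.conjExponent hp).symm
  exact memLp_one_iff_integrable.1 (hh.smul (memLp_exp_neg_mul_Ioi hε p.conjExponent))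

theorem MeasureTheory.MemLp.exists_measure_lt_norm_lt_top {α E : Type*} [MeasurableSpace α]
    {μ : Measure α} [NormedAddCommGroup E] {p : ℝ≥0∞} (hp : p ≠ 0) {f : α → E} (hf : MemLp f p μ) :
    ∃ C : ℝ, μ {x | C < ‖f x‖} < ∞ := by
  rcases eq_or_ne p ∞ with rfl | hp_top
  · have hfin : eLpNormEssSup f μ ≠ ∞ := by simpa using hf.eLpNorm_lt_top.ne
    refine ⟨(eLpNormEssSup f μ).toReal, ?_⟩
    have hnull : μ {x | (eLpNormEssSup f μ).toReal < ‖f x‖} = 0 := by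
      refine measure_mono_null (fun x hx => ?_) (ae_le_eLpNormEssSup (f := f))
      intro (hle : ‖f x‖ₑ ≤ eLpNormEssSup f μ)
      exact hx.out.not_ge (by simpa using ENNReal.toReal_mono hfin hle)
    simp [hnull]
  · refine ⟨1, lt_of_le_of_lt (measure_mono fun x hx => ?_)
      (hf.meas_ge_lt_top hp hp_top one_ne_zero)⟩
    exact (le_of_lt hx : (1 : ℝ) ≤ ‖f x‖)

theorem not_memLp_Ioi_of_tendsto_norm_atTop {E : Type*} [NormedAddCommGroup E] {p : ℝ≥0∞}
    (hp : p ≠ 0) {X : ℝ → E} (hX : Tendsto (fun t => ‖X t‖) atTop atTop) (a : ℝ) :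
    ¬ MemLp X p (volume.restrict (Ioi a)) := by
  intro hXp
  obtain ⟨C, hC⟩ := hXp.exists_measure_lt_norm_lt_top hp
  obtain ⟨T, hT⟩ := eventually_atTop.1 (hX.eventually_gt_atTop C)
  have hsub : Ioi T ⊆ {t | C < ‖X t‖} := fun t ht => hT t (le_of_lt ht)
  have hinf : volume.restrict (Ioi a) (Ioi T) = ∞ := by
    rw [Measure.restrict_apply measurableSet_Ioi, Ioi_inter_Ioi, Real.volume_Ioi]
  exact hC.ne (top_unique (hinf ▸ measure_mono hsub))

section Duhamel

variable {σ : ℝ → ℝ} {σ₀ ρ : ℝ} {f₁ x₁ : ℝ → ℝ}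

theorem mul_sub_le_intervalIntegral (hσc : Continuous σ) (hσ : ∀ t, 0 ≤ t → σ₀ ≤ σ t)
    {t s : ℝ} (ht : 0 ≤ t) (hts : t ≤ s) : σ₀ * (s - t) ≤ ∫ τ in t..s, σ τ := by
  have := intervalIntegral.integral_mono_on hts (intervalIntegrable_const (μ := volume))
    (hσc.intervalIntegrable t s) fun τ hτ => hσ τ (ht.trans hτ.1)
  simpa [mul_comm] using this

theorem integrableOn_exp_neg_integral_mul {p : ℝ≥0∞} (hp : 1 ≤ p) (hρσ : ρ < σ₀)
    (hσc : Continuous σ) (hσ : ∀ t, 0 ≤ t → σ₀ ≤ σ t)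
    (hf₁ : MemLp (fun t => Real.exp (-ρ * t) * f₁ t) p (volume.restrict (Ioi 0))) :
    IntegrableOn (fun s => Real.exp (-∫ τ in (0:ℝ)..s, σ τ) * f₁ s) (Ioi 0) := by
  have hS : Continuous fun s => ∫ τ in (0:ℝ)..s, σ τ :=
    intervalIntegral.continuous_primitive (fun a b => hσc.intervalIntegrable a b) 0
  have hdom := (hf₁.integrableOn_exp_neg_mul_smul_Ioi hp (sub_pos.2 hρσ)).norm
  have hfactor : ∀ s, Real.exp (-∫ τ in (0:ℝ)..s, σ τ) * f₁ s
      = Real.exp (ρ * s - ∫ τ in (0:ℝ)..s, σ τ) * (Real.exp (-ρ * s) * f₁ s) := fun s => by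
    rw [← mul_assoc, ← Real.exp_add]; ring_nf
  simp_rw [hfactor]
  have hweight : Continuous fun s => Real.exp (ρ * s - ∫ τ in (0:ℝ)..s, σ τ) := by fun_prop
  refine hdom.mono' (hweight.aestronglyMeasurable.mul hf₁.1) ?_
  filter_upwards [self_mem_ae_restrict measurableSet_Ioi] with s hs
  have hgap := mul_sub_le_intervalIntegral hσc hσ le_rfl (le_of_lt hs)
  rw [norm_mul, norm_smul, Real.norm_of_nonneg (Real.exp_nonneg _),
    Real.norm_of_nonneg (Real.exp_nonneg _)]
  gcongr
  linarith

theorem eq_neg_integral_Ioi_of_memLp {p : ℝ≥0∞} (hp : p ≠ 0) (hρσ : ρ < σ₀)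
    (hσc : Continuous σ) (hσ : ∀ t, 0 ≤ t → σ₀ ≤ σ t)
    (hg : IntegrableOn (fun s => Real.exp (-∫ τ in (0:ℝ)..s, σ τ) * f₁ s) (Ioi 0))
    (hx₁ : ∀ t, 0 ≤ t →
      x₁ t = Real.exp (∫ τ in (0:ℝ)..t, σ τ) *
        (x₁ 0 + ∫ s in (0:ℝ)..t, Real.exp (-∫ τ in (0:ℝ)..s, σ τ) * f₁ s))
    (hX : MemLp (fun t => Real.exp (-ρ * t) * x₁ t) p (volume.restrict (Ioi 0))) :
    x₁ 0 = -∫ t in Ioi (0:ℝ), Real.exp (-∫ τ in (0:ℝ)..t, σ τ) * f₁ t := by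
  by_contra hne
  refine not_memLp_Ioi_of_tendsto_norm_atTop hp ?_ 0 hX
  have hpos : 0 < |x₁ 0 + ∫ t in Ioi (0:ℝ), Real.exp (-∫ τ in (0:ℝ)..t, σ τ) * f₁ t| :=
    abs_pos.2 fun h => hne (eq_neg_of_add_eq_zero_left h)
  have hlim : Tendsto (fun t => |x₁ 0 + ∫ s in (0:ℝ)..t, Real.exp (-∫ τ in (0:ℝ)..s, σ τ) * f₁ s|)
      atTop (𝓝 |x₁ 0 + ∫ t in Ioi (0:ℝ), Real.exp (-∫ τ in (0:ℝ)..t, σ τ) * f₁ t|) :=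
    (tendsto_const_nhds.add (intervalIntegral_tendsto_integral_Ioi 0 hg tendsto_id)).abs
  have hgrowth : Tendsto (fun t => Real.exp ((∫ τ in (0:ℝ)..t, σ τ) - ρ * t)) atTop atTop := by
    refine tendsto_atTop_mono' _ ?_
      (Real.tendsto_exp_atTop.comp (tendsto_id.const_mul_atTop (sub_pos.2 hρσ)))
    filter_upwards [eventually_ge_atTop 0] with t ht
    have := mul_sub_le_intervalIntegral hσc hσ le_rfl ht
    simp only [Function.comp_apply, id, Real.exp_le_exp]
    linarith
  refine (hgrowth.atTop_mul_pos hpos hlim).congr' ?_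
  filter_upwards [eventually_ge_atTop 0] with t ht
  rw [hx₁ t ht, Real.norm_eq_abs, abs_mul, abs_mul, abs_of_pos (Real.exp_pos _),
    abs_of_pos (Real.exp_pos _), ← mul_assoc, ← Real.exp_add]
  ring_nf

theorem eq_neg_exp_mul_integral_Ioi
    (hg : IntegrableOn (fun s => Real.exp (-∫ τ in (0:ℝ)..s, σ τ) * f₁ s) (Ioi 0))
    (hx₁ : ∀ t, 0 ≤ t →
      x₁ t = Real.exp (∫ τ in (0:ℝ)..t, σ τ) *
        (x₁ 0 + ∫ s in (0:ℝ)..t, Real.exp (-∫ τ in (0:ℝ)..s, σ τ) * f₁ s))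
    (hx0 : x₁ 0 = -∫ t in Ioi (0:ℝ), Real.exp (-∫ τ in (0:ℝ)..t, σ τ) * f₁ t)
    {t : ℝ} (ht : 0 ≤ t) :
    x₁ t = -(Real.exp (∫ τ in (0:ℝ)..t, σ τ) *
      ∫ s in Ioi t, Real.exp (-∫ τ in (0:ℝ)..s, σ τ) * f₁ s) := by
  rw [hx₁ t ht, hx0, ← intervalIntegral.integral_Ioi_sub_Ioi hg ht]
  ring

theorem exp_mul_integral_Ioi_exp_neg_integral_mul (hσc : Continuous σ) (t : ℝ) :
    Real.exp (∫ τ in (0:ℝ)..t, σ τ) * ∫ s in Ioi t, Real.exp (-∫ τ in (0:ℝ)..s, σ τ) * f₁ s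
      = ∫ s in Ioi t, Real.exp (∫ τ in s..t, σ τ) * f₁ s := by
  rw [← integral_const_mul]
  refine integral_congr_ae (ae_of_all _ fun s => ?_)
  dsimp only
  rw [← mul_assoc, ← Real.exp_add, ← sub_eq_add_neg,
    intervalIntegral.integral_interval_sub_left (hσc.intervalIntegrable 0 t)
      (hσc.intervalIntegrable 0 s)]

theorem memLp_of_eq_neg_exp_mul_integral_Ioi {p : ℝ≥0∞} (hp : 1 ≤ p) (hρσ : ρ < σ₀)
    (hσc : Continuous σ) (hσ : ∀ t, 0 ≤ t → σ₀ ≤ σ t)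
    (hf₁ : MemLp (fun t => Real.exp (-ρ * t) * f₁ t) p (volume.restrict (Ioi 0)))
    (hg : IntegrableOn (fun s => Real.exp (-∫ τ in (0:ℝ)..s, σ τ) * f₁ s) (Ioi 0))
    (hx : ∀ t, 0 ≤ t → x₁ t = -(Real.exp (∫ τ in (0:ℝ)..t, σ τ) *
      ∫ s in Ioi t, Real.exp (-∫ τ in (0:ℝ)..s, σ τ) * f₁ s)) :
    MemLp (fun t => Real.exp (-ρ * t) * x₁ t) p (volume.restrict (Ioi 0)) := by
  have hS : Continuous fun s => ∫ τ in (0:ℝ)..s, σ τ :=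
    intervalIntegral.continuous_primitive (fun a b => hσc.intervalIntegrable a b) 0
  have hcont : ContinuousOn (fun t => Real.exp (-ρ * t) * x₁ t) (Ioi 0) := by
    refine ContinuousOn.congr ?_ fun t ht => by rw [hx t (le_of_lt ht)]
    exact (Continuous.continuousOn (by fun_prop)).mul ((Continuous.continuousOn (by fun_prop)).mul
      (hg.continuousOn_Ici_primitive_Ioi.mono Ioi_subset_Ici_self)).neg
  refine memLp_Ioi_of_enorm_le_lintegral_exp_kernel hp (sub_pos.2 hρσ) hf₁
    (hcont.aestronglyMeasurable measurableSet_Ioi) fun t ht => ?_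
  have hrepr : Real.exp (-ρ * t) * x₁ t = -∫ s in Ioi t,
      Real.exp (ρ * (s - t) - ∫ τ in t..s, σ τ) * (Real.exp (-ρ * s) * f₁ s) := by
    rw [hx t (le_of_lt ht), mul_neg, ← integral_const_mul, ← integral_const_mul]
    congr 1
    refine integral_congr_ae (ae_of_all _ fun s => ?_)
    dsimp only
    rw [← intervalIntegral.integral_interval_sub_left (hσc.intervalIntegrable 0 s)
      (hσc.intervalIntegrable 0 t)]
    simp only [← mul_assoc, ← Real.exp_add]
    ring_nf
  rw [hrepr, enorm_neg]
  refine (enorm_integral_le_lintegral_enorm _).trans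
    (setLIntegral_mono' measurableSet_Ioi fun s (hs : t < s) => ?_)
  rw [enorm_mul, Real.enorm_eq_ofReal (Real.exp_nonneg _)]
  gcongr
  linarith [mul_sub_le_intervalIntegral hσc hσ (le_of_lt ht) hs.le]

end Duhamel

theorem stmt_2_general (p : ℝ≥0∞) (hp : 1 ≤ p) (σ₀ ρ : ℝ) (hρσ : ρ < σ₀)
    (σ : ℝ → ℝ) (hσc : Continuous σ) (hσ : ∀ t, 0 ≤ t → σ₀ ≤ σ t)
    (f₁ x₁ : ℝ → ℝ)
    (hf₁ : MemLp (fun t => Real.exp (-ρ * t) * f₁ t) p (volume.restrict (Ioi 0)))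
    (hx₁ : ∀ t, 0 ≤ t →
      x₁ t = Real.exp (∫ τ in (0:ℝ)..t, σ τ) *
        (x₁ 0 + ∫ s in (0:ℝ)..t, Real.exp (-∫ τ in (0:ℝ)..s, σ τ) * f₁ s)) :
    (MemLp (fun t => Real.exp (-ρ * t) * x₁ t) p (volume.restrict (Ioi 0)) ↔
      x₁ 0 = -∫ t in Ioi (0:ℝ), Real.exp (-∫ τ in (0:ℝ)..t, σ τ) * f₁ t) ∧
    (MemLp (fun t => Real.exp (-ρ * t) * x₁ t) p (volume.restrict (Ioi 0)) →
      ∀ t, 0 ≤ t → x₁ t = -∫ s in Ioi t, Real.exp (∫ τ in s..t, σ τ) * f₁ s) := by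
  have hg := integrableOn_exp_neg_integral_mul hp hρσ hσc hσ hf₁
  have hinit : MemLp (fun t => Real.exp (-ρ * t) * x₁ t) p (volume.restrict (Ioi 0)) →
      x₁ 0 = -∫ t in Ioi (0:ℝ), Real.exp (-∫ τ in (0:ℝ)..t, σ τ) * f₁ t :=
    eq_neg_integral_Ioi_of_memLp (zero_lt_one.trans_le hp).ne' hρσ hσc hσ hg hx₁
  refine ⟨⟨hinit, fun hx0 => ?_⟩, fun hX t ht => ?_⟩
  · exact memLp_of_eq_neg_exp_mul_integral_Ioi hp hρσ hσc hσ hf₁ hg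
      fun t ht => eq_neg_exp_mul_integral_Ioi hg hx₁ hx0 ht
  · rw [eq_neg_exp_mul_integral_Ioi hg hx₁ (hinit hX) ht,
      exp_mul_integral_Ioi_exp_neg_integral_mul hσc]

/-- Lemma 2.5, increasing mode: with `σ(t) ≥ σ₀ > ρ ≥ 0` and
`f₁ ∈ e^{ρt}L^p(0,∞)`, the solution of `x₁' = σ x₁ + f₁` (in the Duhamel sense)
lies in `e^{ρt}L^p(0,∞)` iff `x₁(0) = -∫_0^∞ e^{-∫_0^t σ} f₁(t) dt`, and in that
case `x₁(t) = -∫_t^∞ e^{∫_s^t σ} f₁(s) ds`. -/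
theorem stmt_2 (p : ℝ≥0∞) (hp : 1 ≤ p) (σ₀ ρ : ℝ) (hρ : 0 ≤ ρ) (hρσ : ρ < σ₀)
    (σ : ℝ → ℝ) (hσc : Continuous σ) (hσ : ∀ t, 0 ≤ t → σ₀ ≤ σ t)
    (f₁ x₁ : ℝ → ℝ)
    (hf₁ : MemLp (fun t => Real.exp (-ρ * t) * f₁ t) p (volume.restrict (Ioi 0)))
    (hx₁ : ∀ t, 0 ≤ t →
      x₁ t = Real.exp (∫ τ in (0:ℝ)..t, σ τ) *
        (x₁ 0 + ∫ s in (0:ℝ)..t, Real.exp (-∫ τ in (0:ℝ)..s, σ τ) * f₁ s)) :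
    (MemLp (fun t => Real.exp (-ρ * t) * x₁ t) p (volume.restrict (Ioi 0)) ↔
      x₁ 0 = -∫ t in Ioi (0:ℝ), Real.exp (-∫ τ in (0:ℝ)..t, σ τ) * f₁ t) ∧
    (MemLp (fun t => Real.exp (-ρ * t) * x₁ t) p (volume.restrict (Ioi 0)) →
      ∀ t, 0 ≤ t → x₁ t = -∫ s in Ioi t, Real.exp (∫ τ in s..t, σ τ) * f₁ s) :=
  stmt_2_general p hp σ₀ ρ hρσ σ hσc hσ f₁ x₁ hf₁ hx₁
end

section
/- Define A_n(t) = ∑_{j=0}^n ⟨at⟩^j / j! where ⟨x⟩ = (1+x^2)^{1/2} and a > 0. Then there is a constant C (independent of n) such that for all t ≥ 0 and all n: (i) ∑_{j=0}^n A_j(t)A_{n-j}(t) ≤ C^n A_n(t), (ii) ∫_0^t A_n(s) ds ≤ C A_{n+1}(t)/a, and (iii) A_n(t) < e^{⟨at⟩}. -/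
/-!
Write `e_n(x) = ∑_{j ≤ n} xʲ/j!`, so that `A_n(t) = e_n(⟨at⟩)`. Everything rests on the binomial
identity `e_m(x + y) = ∑_{i ≤ m} xⁱ/i! · e_{m-i}(y)`, which for `x, y ≥ 0` gives both
`e_j(x) e_k(y) ≤ e_{j+k}(x + y)` and `e_m(x + y) ≤ e_m(x) e_m(y)`.

(i) Each product `e_j(x) e_{n-j}(x)` is at most `e_n(2x) ≤ 2ⁿ e_n(x)`, and `n + 1 ≤ 2ⁿ`.
(ii) Since `⟨as⟩ ≤ 1 + as` and `e_{n+1}' = e_n`, the integral is at most `e_{n+1}(1 + at)/a`, and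
`e_{n+1}(1 + at) ≤ e_{n+1}(1) e_{n+1}(at) ≤ e · A_{n+1}(t)`.
(iii) `e_n(x) < e_{n+1}(x) ≤ eˣ` for `x > 0`.
-/

/-- The Japanese bracket `⟨x⟩ = √(1+x²)`. -/
noncomputable def jb (x : ℝ) : ℝ := Real.sqrt (1 + x ^ 2)

/-- The polynomial weight `A_n(t) = ∑_{j=0}^n ⟨at⟩^j/j!`. -/
noncomputable def Aw (a : ℝ) (n : ℕ) (t : ℝ) : ℝ :=
  ∑ j ∈ Finset.range (n + 1), jb (a * t) ^ j / (Nat.factorial j)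

open Finset Nat

noncomputable def expPartial (n : ℕ) (x : ℝ) : ℝ := ∑ j ∈ range (n + 1), x ^ j / j !

lemma add_pow_div_factorial (x y : ℝ) (m : ℕ) :
    (x + y) ^ m / m ! = ∑ k ∈ range (m + 1), x ^ k / k ! * (y ^ (m - k) / (m - k)!) := by
  rw [add_pow, sum_div]
  refine sum_congr rfl fun k hk => ?_
  have hkm : k ≤ m := Nat.lt_succ_iff.mp (mem_range.mp hk)
  rw [← Nat.choose_mul_factorial_mul_factorial hkm]
  push_cast
  have := Nat.choose_pos hkm
  field_simp

lemma expPartial_add (x y : ℝ) (m : ℕ) :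
    expPartial m (x + y) = ∑ i ∈ range (m + 1), x ^ i / i ! * expPartial (m - i) y := by
  simp only [expPartial, add_pow_div_factorial, mul_sum]
  rw [sum_range_diag_flip (m + 1) fun i l => x ^ i / i ! * (y ^ l / l !)]
  refine sum_congr rfl fun i hi => ?_
  rw [Nat.sub_add_comm (Nat.lt_succ_iff.mp (mem_range.mp hi))]

lemma expPartial_term_nonneg {x : ℝ} (hx : 0 ≤ x) (j : ℕ) : 0 ≤ x ^ j / j ! := by positivity

lemma expPartial_nonneg {x : ℝ} (hx : 0 ≤ x) (n : ℕ) : 0 ≤ expPartial n x :=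
  sum_nonneg fun j _ => expPartial_term_nonneg hx j

lemma monotone_expPartial {x : ℝ} (hx : 0 ≤ x) : Monotone (expPartial · x) := fun _ _ hmn =>
  sum_le_sum_of_subset_of_nonneg (range_subset_range.mpr (by omega))
    fun j _ _ => expPartial_term_nonneg hx j

lemma expPartial_le_expPartial {x y : ℝ} (hx : 0 ≤ x) (hxy : x ≤ y) (n : ℕ) :
    expPartial n x ≤ expPartial n y :=
  sum_le_sum fun j _ => by gcongr

lemma expPartial_add_le_mul {x y : ℝ} (hx : 0 ≤ x) (hy : 0 ≤ y) (m : ℕ) :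
    expPartial m (x + y) ≤ expPartial m x * expPartial m y := by
  rw [expPartial_add, expPartial, sum_mul]
  exact sum_le_sum fun i _ =>
    mul_le_mul_of_nonneg_left (monotone_expPartial hy (Nat.sub_le m i))
      (expPartial_term_nonneg hx i)

lemma expPartial_mul_le_add {x y : ℝ} (hx : 0 ≤ x) (hy : 0 ≤ y) (j k : ℕ) :
    expPartial j x * expPartial k y ≤ expPartial (j + k) (x + y) := by
  rw [expPartial_add, expPartial, sum_mul]
  calc ∑ i ∈ range (j + 1), x ^ i / i ! * expPartial k y
      ≤ ∑ i ∈ range (j + 1), x ^ i / i ! * expPartial (j + k - i) y :=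
        sum_le_sum fun i hi => mul_le_mul_of_nonneg_left
          (monotone_expPartial hy (by simp only [mem_range] at hi; omega))
          (expPartial_term_nonneg hx i)
    _ ≤ ∑ i ∈ range (j + k + 1), x ^ i / i ! * expPartial (j + k - i) y :=
        sum_le_sum_of_subset_of_nonneg (range_subset_range.mpr (by omega))
          fun i _ _ => mul_nonneg (expPartial_term_nonneg hx i) (expPartial_nonneg hy _)

lemma expPartial_two_mul_le {x : ℝ} (hx : 0 ≤ x) (n : ℕ) :
    expPartial n (2 * x) ≤ 2 ^ n * expPartial n x := by
  rw [expPartial, expPartial, mul_sum]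
  refine sum_le_sum fun j hj => ?_
  rw [mul_pow, mul_div_assoc]
  have : (2 : ℝ) ^ j ≤ 2 ^ n :=
    pow_le_pow_right₀ one_le_two (by simp only [mem_range] at hj; omega)
  gcongr

lemma sum_expPartial_mul_le {x : ℝ} (hx : 0 ≤ x) (n : ℕ) :
    ∑ j ∈ range (n + 1), expPartial j x * expPartial (n - j) x ≤ 4 ^ n * expPartial n x := by
  have hterm : ∀ j ∈ range (n + 1),
      expPartial j x * expPartial (n - j) x ≤ 2 ^ n * expPartial n x := by
    intro j hj
    have hjn : j + (n - j) = n := by simp only [mem_range] at hj; omega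
    calc expPartial j x * expPartial (n - j) x ≤ expPartial n (2 * x) := by
          simpa only [hjn, two_mul] using expPartial_mul_le_add hx hx j (n - j)
      _ ≤ 2 ^ n * expPartial n x := expPartial_two_mul_le hx n
  calc ∑ j ∈ range (n + 1), expPartial j x * expPartial (n - j) x
      ≤ (n + 1) * (2 ^ n * expPartial n x) := by
        simpa using sum_le_card_nsmul _ _ _ hterm
    _ ≤ 2 ^ n * (2 ^ n * expPartial n x) := by
        gcongr
        · exact mul_nonneg (by positivity) (expPartial_nonneg hx n)
        · exact_mod_cast Nat.lt_two_pow_self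
    _ = 4 ^ n * expPartial n x := by rw [← mul_assoc, ← mul_pow]; norm_num

lemma expPartial_lt_exp {x : ℝ} (hx : 0 < x) (n : ℕ) : expPartial n x < Real.exp x :=
  calc expPartial n x < expPartial n x + x ^ (n + 1) / (n + 1)! :=
        lt_add_of_pos_right _ (by positivity)
    _ = ∑ j ∈ range (n + 2), x ^ j / j ! := (sum_range_succ _ (n + 1)).symm
    _ ≤ Real.exp x := Real.sum_le_exp_of_nonneg hx.le _

lemma hasDerivAt_expPartial_succ (n : ℕ) (x : ℝ) :
    HasDerivAt (expPartial (n + 1)) (expPartial n x) x := by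
  have hterm : ∀ j ∈ range (n + 1),
      HasDerivAt (fun x : ℝ => x ^ (j + 1) / (j + 1)!) (x ^ j / j !) x := by
    intro j _
    refine ((hasDerivAt_pow (j + 1) x).div_const ((j + 1)! : ℝ)).congr_deriv ?_
    rw [Nat.factorial_succ]
    push_cast
    field_simp
  have hsplit :
      expPartial (n + 1) = fun y : ℝ => 1 + ∑ j ∈ range (n + 1), y ^ (j + 1) / (j + 1)! := by
    ext y; rw [expPartial, sum_range_succ', add_comm]; simp
  rw [hsplit]
  exact (HasDerivAt.fun_sum hterm).const_add 1

@[fun_prop]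
lemma continuous_expPartial (n : ℕ) : Continuous (expPartial n) := by
  unfold expPartial; fun_prop

lemma jb_pos (x : ℝ) : 0 < jb x := Real.sqrt_pos.mpr (by positivity)

lemma le_jb (x : ℝ) : x ≤ jb x := Real.le_sqrt_of_sq_le (by linarith)

lemma jb_le_one_add {x : ℝ} (hx : 0 ≤ x) : jb x ≤ 1 + x :=
  Real.sqrt_le_iff.mpr ⟨by linarith, by nlinarith⟩

@[fun_prop]
lemma continuous_jb : Continuous jb := by unfold jb; fun_prop

lemma integral_expPartial_one_add_mul {a : ℝ} (ha : a ≠ 0) (n : ℕ) (t : ℝ) :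
    ∫ s in (0 : ℝ)..t, expPartial n (1 + a * s)
      = (expPartial (n + 1) (1 + a * t) - expPartial (n + 1) 1) / a := by
  have hderiv : ∀ s : ℝ, HasDerivAt (fun s => expPartial (n + 1) (1 + a * s) / a)
      (expPartial n (1 + a * s)) s := by
    intro s
    have hlin : HasDerivAt (fun s : ℝ => 1 + a * s) a s := by
      simpa using ((hasDerivAt_id s).const_mul a).const_add 1
    refine (((hasDerivAt_expPartial_succ n _).comp s hlin).div_const a).congr_deriv ?_
    field_simp
  have hcont : Continuous fun s => expPartial n (1 + a * s) := by fun_prop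
  rw [intervalIntegral.integral_eq_sub_of_hasDerivAt (fun s _ => hderiv s)
    (hcont.intervalIntegrable _ _)]
  simp [sub_div]

lemma integral_expPartial_jb_le {a t : ℝ} (ha : 0 < a) (ht : 0 ≤ t) (n : ℕ) :
    ∫ s in (0 : ℝ)..t, expPartial n (jb (a * s))
      ≤ Real.exp 1 * expPartial (n + 1) (jb (a * t)) / a := by
  have hat : 0 ≤ a * t := by positivity
  calc ∫ s in (0 : ℝ)..t, expPartial n (jb (a * s))
      ≤ ∫ s in (0 : ℝ)..t, expPartial n (1 + a * s) := by
        have hcont : Continuous fun s => expPartial n (jb (a * s)) := by fun_prop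
        have hcont' : Continuous fun s => expPartial n (1 + a * s) := by fun_prop
        refine intervalIntegral.integral_mono_on ht (hcont.intervalIntegrable _ _)
          (hcont'.intervalIntegrable _ _) fun s hs => ?_
        have has : 0 ≤ a * s := mul_nonneg ha.le hs.1
        exact expPartial_le_expPartial (jb_pos _).le (jb_le_one_add has) n
    _ = (expPartial (n + 1) (1 + a * t) - expPartial (n + 1) 1) / a :=
        integral_expPartial_one_add_mul ha.ne' n t
    _ ≤ expPartial (n + 1) 1 * expPartial (n + 1) (a * t) / a := by
        gcongr
        exact (sub_le_self _ (expPartial_nonneg zero_le_one _)).trans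
          (expPartial_add_le_mul zero_le_one hat _)
    _ ≤ Real.exp 1 * expPartial (n + 1) (jb (a * t)) / a := by
        gcongr
        · exact expPartial_nonneg hat _
        · exact (expPartial_lt_exp one_pos _).le
        · exact expPartial_le_expPartial hat (le_jb _) _

/-- Properties of the polynomial weights `A_n`: uniformly in `n`,
`∑_{j≤n} A_j A_{n-j} ≤ Cⁿ A_n`, `∫_0^t A_n ≤ C A_{n+1}(t)/a`, and `A_n(t) < e^{⟨at⟩}`. -/
theorem stmt_6 (a : ℝ) (ha : 0 < a) :
    ∃ C > (0:ℝ), ∀ (n : ℕ) (t : ℝ), 0 ≤ t →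
      (∑ j ∈ Finset.range (n + 1), Aw a j t * Aw a (n - j) t ≤ C ^ n * Aw a n t) ∧
      (∫ s in (0:ℝ)..t, Aw a n s ≤ C * Aw a (n + 1) t / a) ∧
      Aw a n t < Real.exp (jb (a * t)) := by
  have hAw : ∀ n t, Aw a n t = expPartial n (jb (a * t)) := fun _ _ => rfl
  refine ⟨4, by norm_num, fun n t ht => ⟨?_, ?_, ?_⟩⟩
  · simpa only [hAw] using sum_expPartial_mul_le (jb_pos (a * t)).le n
  · simp only [hAw]
    have he : Real.exp 1 ≤ 4 := by linarith [Real.exp_one_lt_d9]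
    calc ∫ s in (0:ℝ)..t, expPartial n (jb (a * s))
        ≤ Real.exp 1 * expPartial (n + 1) (jb (a * t)) / a := integral_expPartial_jb_le ha ht n
      _ ≤ 4 * expPartial (n + 1) (jb (a * t)) / a := by
          gcongr
          exact expPartial_nonneg (jb_pos _).le _
  · exact expPartial_lt_exp (jb_pos _) n
end
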